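/- arXiv:2001.10150 — 3 statements merged into one kernel-verified Lean document; each statement's English description precedes it below -/
import Mathlib

section
/- Extended optional stopping theorem with polynomial growth, martingale version (Theorem C.3): Let (Ω, F, P) be a probability space with filtration (F_n)_{n∈ℕ}, let (Y_n)_{n∈ℕ} be a martingale with respect to (F_n) with E[|Y_n|] < ∞ for all n, and let T : Ω → ℕ ∪ {∞} be a stopping time with respect to (F_n). Suppose there exist ℓ ∈ ℕ with ℓ ≥ 1 and a constant C ≥ 0 such that E[T^ℓ] < ∞ and, for every n ∈ ℕ, |Y_n| ≤ C·(n+1)^ℓ holds P-almost surely. Then T < ∞ almost surely, the stopped value Y_T (the almost-everywhere defined function ω ↦ Y_{T(ω)}(ω)) is integrable, and E[Y_T] = E[Y_0]. -/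
open MeasureTheory Filter
open scoped ENNReal Topology

/-!
Stop the martingale at the bounded times `T ∧ n`: by optional stopping each `Y_{T ∧ n}` has mean
`E[Y_0]`. The growth bound gives `|Y_{T ∧ n}| ≤ C (T + 1)^ℓ`, which is integrable because
`E[T^ℓ] < ∞` (this also forces `T < ∞` a.s.), so dominated convergence lets `n → ∞`.
-/

theorem ENat.toReal_toENNReal (n : ℕ∞) : (n : ℝ≥0∞).toReal = n.toNat := by
  cases n <;> simp

namespace MeasureTheory

variable {Ω : Type*} {m : MeasurableSpace Ω} {μ : Measure Ω}

theorem ae_lt_top_of_lintegral_pow_ne_top {X : Ω → ℝ≥0∞} (hX : AEMeasurable X μ) {ℓ : ℕ}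
    (hℓ : ℓ ≠ 0) (h : ∫⁻ ω, X ω ^ ℓ ∂μ ≠ ∞) : ∀ᵐ ω ∂μ, X ω < ∞ := by
  filter_upwards [ae_lt_top' (hX.pow_const ℓ) h] with ω hω
  simpa [hℓ] using hω

theorem integrable_toNat_add_one_pow [IsFiniteMeasure μ] {T : Ω → ℕ∞} (hT : Measurable T)
    {ℓ : ℕ} (h : ∫⁻ ω, (T ω : ℝ≥0∞) ^ ℓ ∂μ ≠ ∞) :
    Integrable (fun ω ↦ (((T ω).toNat : ℝ) + 1) ^ ℓ) μ := by
  have hTℓ : Integrable (fun ω ↦ ((T ω).toNat : ℝ) ^ ℓ) μ := by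
    simpa [ENNReal.toReal_pow, ENat.toReal_toENNReal] using
      integrable_toReal_of_lintegral_ne_top (by fun_prop) h
  have hmeas : Measurable fun ω ↦ (((T ω).toNat : ℝ) + 1) ^ ℓ :=
    (measurable_of_countable fun n : ℕ∞ ↦ ((n.toNat : ℝ) + 1) ^ ℓ).comp hT
  refine ((hTℓ.add (integrable_const 1)).const_mul (2 ^ (ℓ - 1))).mono'
    hmeas.aestronglyMeasurable (ae_of_all _ fun ω ↦ ?_)
  rw [Real.norm_of_nonneg (by positivity)]
  simpa using add_pow_le ((T ω).toNat.cast_nonneg : (0 : ℝ) ≤ _) zero_le_one ℓ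

variable {ℱ : Filtration ℕ m} {f : ℕ → Ω → ℝ} {τ σ : Ω → WithTop ℕ}

theorem stoppedValue_of_ne_top {T : Ω → ℕ∞} {ω : Ω} (hT : T ω ≠ ⊤) :
    stoppedValue f T ω = f (T ω).toNat ω := by
  obtain ⟨n, hn⟩ := WithTop.ne_top_iff_exists.1 hT
  simp only [stoppedValue, ← hn]
  rfl

theorem StronglyAdapted.aestronglyMeasurable_stoppedValue (hf : StronglyAdapted ℱ f)
    (hτ : IsStoppingTime ℱ τ) : AEStronglyMeasurable (stoppedValue f τ) μ :=
  ((measurable_stoppedValue hf.isStronglyProgressive_of_discrete hτ).mono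
    hτ.measurableSpace_le le_rfl).aestronglyMeasurable

theorem Martingale.integral_stoppedValue_of_le_const [SigmaFiniteFiltration μ ℱ]
    (hf : Martingale f ℱ μ) (hτ : IsStoppingTime ℱ τ) {N : ℕ} (hbdd : ∀ ω, τ ω ≤ N) :
    ∫ ω, stoppedValue f τ ω ∂μ = ∫ ω, f 0 ω ∂μ := by
  have h0 : (fun _ ↦ ((0 : ℕ) : WithTop ℕ)) ≤ τ := fun _ ↦ by simp
  have hle := hf.submartingale.expected_stoppedValue_mono (isStoppingTime_const ℱ 0) hτ h0 hbdd
  have hge := hf.neg.submartingale.expected_stoppedValue_mono (isStoppingTime_const ℱ 0) hτ h0 hbdd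
  simp only [stoppedValue, Pi.neg_apply, integral_neg, neg_le_neg_iff] at hle hge
  exact le_antisymm hge hle

theorem abs_stoppedValue_le {g : Ω → ℝ} {ω : Ω} (hfg : ∀ n : ℕ, ↑n ≤ τ ω → |f n ω| ≤ g ω)
    (hσ : σ ω ≠ ⊤) (hστ : σ ω ≤ τ ω) : |stoppedValue f σ ω| ≤ g ω := by
  obtain ⟨n, hn⟩ := WithTop.ne_top_iff_exists.1 hσ
  simp only [stoppedValue, ← hn]
  exact hfg n (hn.trans_le hστ)

theorem tendsto_stoppedValue_min_const {ω : Ω} (hτ : τ ω ≠ ⊤) :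
    Tendsto (fun n : ℕ ↦ stoppedValue f (fun ω ↦ min (τ ω) n) ω) atTop
      (𝓝 (stoppedValue f τ ω)) := by
  obtain ⟨N, hN⟩ := WithTop.ne_top_iff_exists.1 hτ
  refine tendsto_atTop_of_eventually_const (i₀ := N) fun n hn ↦ ?_
  simp [stoppedValue, ← hN, hn]

section Dominated

variable {g : Ω → ℝ} (hτ : IsStoppingTime ℱ τ) (hτ_fin : ∀ᵐ ω ∂μ, τ ω ≠ ⊤)
  (hg : Integrable g μ) (hfg : ∀ᵐ ω ∂μ, ∀ n : ℕ, ↑n ≤ τ ω → |f n ω| ≤ g ω)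
include hτ hτ_fin hg hfg

theorem StronglyAdapted.integrable_stoppedValue_of_dominated (hf : StronglyAdapted ℱ f) :
    Integrable (stoppedValue f τ) μ := by
  refine hg.mono' (hf.aestronglyMeasurable_stoppedValue hτ) ?_
  filter_upwards [hfg, hτ_fin] with ω hω hω_fin
  exact abs_stoppedValue_le hω hω_fin le_rfl

theorem Martingale.integral_stoppedValue_eq_of_dominated [SigmaFiniteFiltration μ ℱ]
    (hf : Martingale f ℱ μ) :
    ∫ ω, stoppedValue f τ ω ∂μ = ∫ ω, f 0 ω ∂μ := by
  have hlim := tendsto_integral_of_dominated_convergence g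
    (fun n ↦ hf.stronglyAdapted.aestronglyMeasurable_stoppedValue (hτ.min_const n)) hg
    (fun n ↦ hfg.mono fun ω hω ↦ abs_stoppedValue_le hω
      ((min_le_right _ _).trans_lt (WithTop.coe_lt_top n)).ne (min_le_left _ _))
    (hτ_fin.mono fun ω hω ↦ tendsto_stoppedValue_min_const hω)
  have hconst : ∀ n : ℕ, ∫ ω, stoppedValue f (fun ω ↦ min (τ ω) n) ω ∂μ = ∫ ω, f 0 ω ∂μ :=
    fun n ↦ hf.integral_stoppedValue_of_le_const (hτ.min_const n) fun _ ↦ min_le_right _ _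
  exact tendsto_nhds_unique (hlim.congr hconst) tendsto_const_nhds

end Dominated

end MeasureTheory

/-- Extended optional stopping theorem with polynomial growth, martingale
version (Theorem C.3): if `(Y_n)` is a martingale, `T` is a stopping time with
`E[T^ℓ] < ∞` for some `ℓ ≥ 1`, and `|Y_n| ≤ C·(n+1)^ℓ` a.s. for all `n`, then
`T < ∞` a.s., the stopped value `Y_T` is integrable, and `E[Y_T] = E[Y_0]`. -/
theorem extended_optional_stopping_martingale
    {Ω : Type*} {mΩ : MeasurableSpace Ω} (P : Measure Ω) [IsProbabilityMeasure P]
    (ℱ : Filtration ℕ mΩ) (Y : ℕ → Ω → ℝ)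
    (hY : Martingale Y ℱ P)
    (T : Ω → ℕ∞) (hT : ∀ n : ℕ, MeasurableSet[ℱ n] {ω | T ω ≤ (n : ℕ∞)})
    (ℓ : ℕ) (hℓ : 1 ≤ ℓ) (C : ℝ) (hC : 0 ≤ C)
    (hTmom : ∫⁻ ω, (T ω : ℝ≥0∞) ^ ℓ ∂P < ⊤)
    (hgrowth : ∀ n : ℕ, ∀ᵐ ω ∂P, |Y n ω| ≤ C * (n + 1) ^ ℓ) :
    (∀ᵐ ω ∂P, T ω < ⊤) ∧
    Integrable (fun ω => Y (T ω).toNat ω) P ∧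
    ∫ ω, Y (T ω).toNat ω ∂P = ∫ ω, Y 0 ω ∂P := by
  have hτ : IsStoppingTime ℱ T := hT
  have hT_meas : Measurable T := ENat.measurable_iff.2 fun n ↦ ℱ.le n _ (hτ.measurableSet_eq n)
  have hT_fin : ∀ᵐ ω ∂P, T ω < ⊤ := by
    filter_upwards [ae_lt_top_of_lintegral_pow_ne_top (by fun_prop) (by omega) hTmom.ne]
      with ω hω using ENat.toENNReal_lt_top.1 hω
  have hg : Integrable (fun ω ↦ C * (((T ω).toNat : ℝ) + 1) ^ ℓ) P :=
    (integrable_toNat_add_one_pow hT_meas hTmom.ne).const_mul C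
  have hYg : ∀ᵐ ω ∂P, ∀ n : ℕ, ↑n ≤ T ω → |Y n ω| ≤ C * (((T ω).toNat : ℝ) + 1) ^ ℓ := by
    filter_upwards [ae_all_iff.2 hgrowth, hT_fin] with ω hω hω_fin n hn
    have : n ≤ (T ω).toNat := by simpa using ENat.toNat_le_toNat hn hω_fin.ne
    calc |Y n ω| ≤ C * (n + 1) ^ ℓ := hω n
      _ ≤ C * (((T ω).toNat : ℝ) + 1) ^ ℓ := by gcongr
  have hYT : stoppedValue Y T =ᵐ[P] fun ω ↦ Y (T ω).toNat ω :=
    hT_fin.mono fun ω hω ↦ stoppedValue_of_ne_top hω.ne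
  have hT_ne_top : ∀ᵐ ω ∂P, T ω ≠ ⊤ := hT_fin.mono fun _ ↦ LT.lt.ne
  refine ⟨hT_fin, ?_, ?_⟩
  · exact (hY.stronglyAdapted.integrable_stoppedValue_of_dominated hτ hT_ne_top hg hYg).congr hYT
  · rw [← integral_congr_ae hYT]
    exact hY.integral_stoppedValue_eq_of_dominated hτ hT_ne_top hg hYg
end

section
/- Extended optional stopping theorem with polynomial growth, supermartingale version (upper-bound half of Theorem D.3): Let (Ω, F, P) be a probability space with filtration (F_n)_{n∈ℕ}, let (U_n)_{n∈ℕ} be a supermartingale with respect to (F_n) (adapted, integrable, and E[U_{n+1} | F_n] ≤ U_n a.s. for all n), and let T : Ω → ℕ ∪ {∞} be a stopping time with respect to (F_n). Suppose there exist ℓ ∈ ℕ with ℓ ≥ 1 and a constant C ≥ 0 such that E[T^ℓ] < ∞ and, for every n ∈ ℕ, |U_n| ≤ C·(n+1)^ℓ holds P-almost surely. Then T < ∞ almost surely, the stopped value U_T is integrable, and E[U_T] ≤ E[U_0]. -/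
/-!
Since `E[T^ℓ] < ∞` and `ℓ ≥ 1`, `T` is a.s. finite. Along the stopped supermartingale
`U_{T ∧ n}` the expectation is at most `E[U_0]`, and `U_{T ∧ n} → U_T` pointwise on `{T < ∞}`.
The growth bound gives `|U_{T ∧ n}| ≤ C (T + 1)^ℓ ≤ C 2^(ℓ-1) (T^ℓ + 1)`, an integrable majorant,
so dominated convergence passes the inequality to the limit.
-/

open MeasureTheory Filter
open scoped ENNReal Topology

namespace MeasureTheory

section Integrability

variable {α : Type*} {mα : MeasurableSpace α} {μ : Measure α}

theorem ae_lt_top_of_lintegral_pow_ne_top_s9 {f : α → ℝ≥0∞} (hf : AEMeasurable f μ) {ℓ : ℕ}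
    (hℓ : ℓ ≠ 0) (h : ∫⁻ x, f x ^ ℓ ∂μ ≠ ∞) : ∀ᵐ x ∂μ, f x < ∞ := by
  filter_upwards [ae_lt_top' (hf.pow_const ℓ) h] with x hx
  exact (ENNReal.pow_lt_top_iff.1 hx).resolve_right hℓ

theorem integrable_add_const_pow [IsFiniteMeasure μ] {X : α → ℝ} (hX : AEStronglyMeasurable X μ)
    (hX0 : ∀ x, 0 ≤ X x) {c : ℝ} (hc : 0 ≤ c) {ℓ : ℕ} (hXℓ : Integrable (fun x => X x ^ ℓ) μ) :
    Integrable (fun x => (X x + c) ^ ℓ) μ := by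
  refine ((hXℓ.add (integrable_const (c ^ ℓ))).const_mul (2 ^ (ℓ - 1))).mono'
    ((hX.add aestronglyMeasurable_const).pow ℓ) (ae_of_all _ fun x => ?_)
  rw [Real.norm_of_nonneg (pow_nonneg (add_nonneg (hX0 x) hc) ℓ)]
  exact add_pow_le (hX0 x) hc ℓ

theorem integrable_toNat_pow {T : α → ℕ∞} (hT : Measurable T) {ℓ : ℕ}
    (h : ∫⁻ x, (T x : ℝ≥0∞) ^ ℓ ∂μ ≠ ∞) : Integrable (fun x => ((T x).toNat : ℝ) ^ ℓ) μ := by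
  convert integrable_toReal_of_lintegral_ne_top (by fun_prop) h using 2 with x
  induction T x using ENat.recTopCoe <;> simp [ENNReal.toReal_pow]

end Integrability

variable {Ω : Type*} {m0 : MeasurableSpace Ω} {μ : Measure Ω} {ℱ : Filtration ℕ m0}
  {U : ℕ → Ω → ℝ} {T : Ω → ℕ∞}

/-- `IsStoppingTime.measurable'` is about the Borel σ-algebra of `WithTop ℕ`, not the
σ-algebra carried by `ℕ∞`. -/
theorem IsStoppingTime.measurable_enat (hT : IsStoppingTime ℱ T) : Measurable T :=
  measurable_to_countable' fun x => hT.measurable' (measurableSet_singleton (α := WithTop ℕ) x)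

theorem stoppedProcess_zero_eq : stoppedProcess U T 0 = U 0 :=
  funext fun _ => stoppedProcess_eq_of_le zero_le

theorem stoppedProcess_apply_of_eq_natCast {ω : Ω} {m : ℕ} (hm : T ω = m) (n : ℕ) :
    stoppedProcess U T n ω = U (min n m) ω := by
  rcases le_total n m with h | h
  · rw [min_eq_left h]
    exact stoppedProcess_eq_of_le (hm ▸ Nat.cast_le.2 h : (n : ℕ∞) ≤ T ω)
  · rw [min_eq_right h]
    exact (stoppedProcess_eq_of_ge (hm ▸ Nat.cast_le.2 h : T ω ≤ n)).trans (by rw [hm]; rfl)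

theorem tendsto_stoppedProcess_of_lt_top {ω : Ω} (hω : T ω < ⊤) :
    Tendsto (fun n => stoppedProcess U T n ω) atTop (𝓝 (U (T ω).toNat ω)) := by
  obtain ⟨m, hm⟩ := ENat.ne_top_iff_exists.1 hω.ne
  refine tendsto_atTop_of_eventually_const (i₀ := m) fun n hn => ?_
  rw [stoppedProcess_apply_of_eq_natCast hm.symm, min_eq_right hn, ← hm]
  rfl

protected theorem Supermartingale.stoppedProcess [SigmaFiniteFiltration μ ℱ]
    (hU : Supermartingale U ℱ μ) (hT : IsStoppingTime ℱ T) :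
    Supermartingale (stoppedProcess U T) ℱ μ :=
  neg_neg (stoppedProcess U T) ▸ (hU.neg.stoppedProcess hT).neg

theorem Supermartingale.integral_stoppedProcess_le [SigmaFiniteFiltration μ ℱ]
    (hU : Supermartingale U ℱ μ) (hT : IsStoppingTime ℱ T) (n : ℕ) :
    ∫ ω, stoppedProcess U T n ω ∂μ ≤ ∫ ω, U 0 ω ∂μ := by
  simpa [stoppedProcess_zero_eq] using
    (hU.stoppedProcess hT).setIntegral_le (Nat.zero_le n) MeasurableSet.univ

section Dominated

variable {g : Ω → ℝ}

theorem norm_stoppedProcess_le_of_dominated (hfin : ∀ᵐ ω ∂μ, T ω < ⊤)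
    (hdom : ∀ᵐ ω ∂μ, ∀ k : ℕ, (k : ℕ∞) ≤ T ω → |U k ω| ≤ g ω) (n : ℕ) :
    ∀ᵐ ω ∂μ, ‖(stoppedProcess U T n ω)‖ ≤ g ω := by
  filter_upwards [hfin, hdom] with ω hω hUg
  obtain ⟨m, hm⟩ := ENat.ne_top_iff_exists.1 hω.ne
  rw [stoppedProcess_apply_of_eq_natCast hm.symm]
  exact hUg _ (hm ▸ Nat.cast_le.2 (min_le_right n m))

theorem norm_stopped_le_of_dominated (hfin : ∀ᵐ ω ∂μ, T ω < ⊤)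
    (hdom : ∀ᵐ ω ∂μ, ∀ k : ℕ, (k : ℕ∞) ≤ T ω → |U k ω| ≤ g ω) :
    ∀ᵐ ω ∂μ, ‖U (T ω).toNat ω‖ ≤ g ω := by
  filter_upwards [hfin, hdom] with ω hω hUg
  exact hUg _ (ENat.natCast_toNat hω.ne).le

theorem Supermartingale.integrable_stopped_of_dominated (hU : Supermartingale U ℱ μ)
    (hT : IsStoppingTime ℱ T) (hfin : ∀ᵐ ω ∂μ, T ω < ⊤) (hg : Integrable g μ)
    (hdom : ∀ᵐ ω ∂μ, ∀ k : ℕ, (k : ℕ∞) ≤ T ω → |U k ω| ≤ g ω) :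
    Integrable (fun ω => U (T ω).toNat ω) μ :=
  hg.mono' (aestronglyMeasurable_of_tendsto_ae atTop
      (fun n => (integrable_stoppedProcess hT hU.integrable n).aestronglyMeasurable)
      (hfin.mono fun _ => tendsto_stoppedProcess_of_lt_top))
    (norm_stopped_le_of_dominated hfin hdom)

theorem Supermartingale.integral_stopped_le_of_dominated [SigmaFiniteFiltration μ ℱ]
    (hU : Supermartingale U ℱ μ) (hT : IsStoppingTime ℱ T) (hfin : ∀ᵐ ω ∂μ, T ω < ⊤)
    (hg : Integrable g μ) (hdom : ∀ᵐ ω ∂μ, ∀ k : ℕ, (k : ℕ∞) ≤ T ω → |U k ω| ≤ g ω) :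
    ∫ ω, U (T ω).toNat ω ∂μ ≤ ∫ ω, U 0 ω ∂μ :=
  le_of_tendsto (tendsto_integral_of_dominated_convergence g
      (fun n => (integrable_stoppedProcess hT hU.integrable n).aestronglyMeasurable) hg
      (norm_stoppedProcess_le_of_dominated hfin hdom)
      (hfin.mono fun _ => tendsto_stoppedProcess_of_lt_top))
    (Eventually.of_forall (hU.integral_stoppedProcess_le hT))

end Dominated

end MeasureTheory

/-- Extended optional stopping theorem with polynomial growth, supermartingale
version (upper-bound half of Theorem D.3): if `(U_n)` is a supermartingale,
`T` is a stopping time with `E[T^ℓ] < ∞` for some `ℓ ≥ 1`, and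
`|U_n| ≤ C·(n+1)^ℓ` a.s. for all `n`, then `T < ∞` a.s., the stopped value
`U_T` is integrable, and `E[U_T] ≤ E[U_0]`. -/
theorem extended_optional_stopping_supermartingale
    {Ω : Type*} {mΩ : MeasurableSpace Ω} (P : Measure Ω) [IsProbabilityMeasure P]
    (ℱ : Filtration ℕ mΩ) (U : ℕ → Ω → ℝ)
    (hU : Supermartingale U ℱ P)
    (T : Ω → ℕ∞) (hT : ∀ n : ℕ, MeasurableSet[ℱ n] {ω | T ω ≤ (n : ℕ∞)})
    (ℓ : ℕ) (hℓ : 1 ≤ ℓ) (C : ℝ) (hC : 0 ≤ C)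
    (hTmom : ∫⁻ ω, (T ω : ℝ≥0∞) ^ ℓ ∂P < ⊤)
    (hgrowth : ∀ n : ℕ, ∀ᵐ ω ∂P, |U n ω| ≤ C * (n + 1) ^ ℓ) :
    (∀ᵐ ω ∂P, T ω < ⊤) ∧
    Integrable (fun ω => U (T ω).toNat ω) P ∧
    ∫ ω, U (T ω).toNat ω ∂P ≤ ∫ ω, U 0 ω ∂P := by
  have hτ : IsStoppingTime ℱ T := hT
  have hTmeas : Measurable T := hτ.measurable_enat
  have hfin : ∀ᵐ ω ∂P, T ω < ⊤ := by
    filter_upwards [ae_lt_top_of_lintegral_pow_ne_top_s9 (by fun_prop) (by omega) hTmom.ne]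
      with ω hω
    exact ENat.toENNReal_lt_top.1 hω
  have hg : Integrable (fun ω => C * (((T ω).toNat : ℝ) + 1) ^ ℓ) P :=
    (integrable_add_const_pow
      ((measurable_of_countable fun n : ℕ∞ => (n.toNat : ℝ)).comp hTmeas).aestronglyMeasurable
      (fun _ => Nat.cast_nonneg _) zero_le_one (integrable_toNat_pow hTmeas hTmom.ne)).const_mul C
  have hdom : ∀ᵐ ω ∂P, ∀ k : ℕ, (k : ℕ∞) ≤ T ω →
      |U k ω| ≤ C * (((T ω).toNat : ℝ) + 1) ^ ℓ := by
    filter_upwards [hfin, ae_all_iff.2 hgrowth] with ω hω hUω k hk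
    calc |U k ω| ≤ C * (k + 1) ^ ℓ := hUω k
      _ ≤ C * (((T ω).toNat : ℝ) + 1) ^ ℓ := by
        gcongr; exact_mod_cast ENat.toNat_le_toNat hk hω.ne
  exact ⟨hfin, hU.integrable_stopped_of_dominated hτ hfin hg hdom,
    hU.integral_stopped_le_of_dominated hτ hfin hg hdom⟩
end

section
/- Ranking-supermartingale bound on expected stopping time (scalar first-moment instance of the termination theorem of Appendix G): Let (Ω, F, P) be a probability space with filtration (F_n)_{n∈ℕ}, let T : Ω → ℕ ∪ {∞} be a stopping time with respect to (F_n), and let (ψ_n)_{n∈ℕ} be an adapted sequence of nonnegative integrable real-valued random variables such that for every n ∈ ℕ, P-almost surely, 1_{{T > n}} + E[ψ_{n+1} | F_n] ≤ ψ_n. Then E[T] ≤ E[ψ_0], where E[T] denotes the Lebesgue integral of T with values in [0,∞]; in particular E[T] is finite. -/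
open MeasureTheory Filter
open scoped ENNReal

/-! Integrating the hypothesis at step `n` (conditional expectation preserves the integral) gives
`P(T > n) + E[ψ (n+1)] ≤ E[ψ n]`. Summed over `n < N` this telescopes to
`∑_{n<N} P(T > n) ≤ E[ψ 0] - E[ψ N] ≤ E[ψ 0]`, and `E[T] = ∑_n P(T > n)`. -/

lemma ENat.toENNReal_eq_tsum_ite_lt (a : ℕ∞) :
    (a : ℝ≥0∞) = ∑' n : ℕ, if (n : ℕ∞) < a then 1 else 0 := by
  induction a using ENat.recTopCoe with
  | top => simp
  | coe m =>
    rw [tsum_eq_sum (s := Finset.range m) fun n hn => by simpa using hn]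
    simp [Finset.filter_true_of_mem, Finset.mem_range]

lemma lintegral_enat_eq_tsum_measure_lt {Ω : Type*} {mΩ : MeasurableSpace Ω} (μ : Measure Ω)
    {T : Ω → ℕ∞} (hT : ∀ n : ℕ, MeasurableSet {ω | (n : ℕ∞) < T ω}) :
    ∫⁻ ω, (T ω : ℝ≥0∞) ∂μ = ∑' n : ℕ, μ {ω | (n : ℕ∞) < T ω} := by
  have hind (n : ℕ) (ω : Ω) : (if (n : ℕ∞) < T ω then (1 : ℝ≥0∞) else 0)
      = {ω | (n : ℕ∞) < T ω}.indicator 1 ω := by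
    simp [Set.indicator_apply]
  simp_rw [ENat.toENNReal_eq_tsum_ite_lt, hind]
  rw [lintegral_tsum fun n => (measurable_one.indicator (hT n)).aemeasurable]
  exact tsum_congr fun n => lintegral_indicator_one (hT n)

lemma ENNReal.tsum_ofReal_le_of_add_le {a b : ℕ → ℝ} (ha : ∀ n, 0 ≤ a n) (hb : ∀ n, 0 ≤ b n)
    (hab : ∀ n, a n + b (n + 1) ≤ b n) :
    ∑' n, ENNReal.ofReal (a n) ≤ ENNReal.ofReal (b 0) := by
  refine ENNReal.tsum_le_of_sum_range_le fun N => ?_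
  rw [← ENNReal.ofReal_sum_of_nonneg fun n _ => ha n]
  refine ENNReal.ofReal_le_ofReal ?_
  calc ∑ n ∈ Finset.range N, a n ≤ ∑ n ∈ Finset.range N, (b n - b (n + 1)) :=
        Finset.sum_le_sum fun n _ => by linarith [hab n]
    _ = b 0 - b N := Finset.sum_range_sub' b N
    _ ≤ b 0 := by linarith [hb N]

lemma measureReal_add_integral_le_of_indicator_add_condExp_le {Ω : Type*}
    {m mΩ : MeasurableSpace Ω} {μ : Measure Ω} [IsFiniteMeasure μ] (hm : m ≤ mΩ)
    {s : Set Ω} (hs : MeasurableSet s)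
    {f g : Ω → ℝ} (hg : Integrable g μ)
    (hle : (fun ω => s.indicator (fun _ => (1 : ℝ)) ω + μ[f | m] ω) ≤ᵐ[μ] g) :
    μ.real s + ∫ ω, f ω ∂μ ≤ ∫ ω, g ω ∂μ := by
  have hind : Integrable (s.indicator (1 : Ω → ℝ)) μ := (integrable_const 1).indicator hs
  have : ∫ ω, (s.indicator (1 : Ω → ℝ) + μ[f | m]) ω ∂μ ≤ ∫ ω, g ω ∂μ :=
    integral_mono_ae (hind.add integrable_condExp) hg hle
  rwa [integral_add' hind integrable_condExp, integral_condExp hm,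
    integral_indicator_one hs] at this

theorem ranking_supermartingale_expected_stopping_time_general
    {Ω : Type*} {mΩ : MeasurableSpace Ω} (P : Measure Ω) [IsProbabilityMeasure P]
    (ℱ : Filtration ℕ mΩ)
    (T : Ω → ℕ∞) (hT : ∀ n : ℕ, MeasurableSet[ℱ n] {ω | T ω ≤ (n : ℕ∞)})
    (ψ : ℕ → Ω → ℝ)
    (hnonneg : ∀ n ω, 0 ≤ ψ n ω)
    (hint : ∀ n, Integrable (ψ n) P)
    (hdec : ∀ n : ℕ,
      (fun ω => {ω | (n : ℕ∞) < T ω}.indicator (fun _ => (1 : ℝ)) ω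
          + (P[ψ (n + 1) | ℱ n]) ω) ≤ᵐ[P] ψ n) :
    ∫⁻ ω, (T ω : ℝ≥0∞) ∂P ≤ ENNReal.ofReal (∫ ω, ψ 0 ω ∂P) := by
  have hmeas (n : ℕ) : MeasurableSet {ω | (n : ℕ∞) < T ω} := by
    simpa only [Set.compl_ofPred, not_le] using (ℱ.le n _ (hT n)).compl
  rw [lintegral_enat_eq_tsum_measure_lt P hmeas]
  simp_rw [← ofReal_measureReal (measure_ne_top P _)]
  exact ENNReal.tsum_ofReal_le_of_add_le (fun _ => measureReal_nonneg)
    (fun n => integral_nonneg (hnonneg n)) fun n =>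
      measureReal_add_integral_le_of_indicator_add_condExp_le (ℱ.le n) (hmeas n) (hint n) (hdec n)

/-- Ranking-supermartingale bound on expected stopping time (scalar
first-moment instance of the termination theorem of Appendix G): if `(ψ_n)` is
an adapted sequence of nonnegative integrable random variables such that, for
every `n`, `1_{T > n} + E[ψ_{n+1} | F_n] ≤ ψ_n` holds almost surely, then the
expected stopping time satisfies `E[T] ≤ E[ψ_0]`; in particular it is finite. -/
theorem ranking_supermartingale_expected_stopping_time
    {Ω : Type*} {mΩ : MeasurableSpace Ω} (P : Measure Ω) [IsProbabilityMeasure P]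
    (ℱ : Filtration ℕ mΩ)
    (T : Ω → ℕ∞) (hT : ∀ n : ℕ, MeasurableSet[ℱ n] {ω | T ω ≤ (n : ℕ∞)})
    (ψ : ℕ → Ω → ℝ)
    (hadapt : ∀ n, StronglyMeasurable[ℱ n] (ψ n))
    (hnonneg : ∀ n ω, 0 ≤ ψ n ω)
    (hint : ∀ n, Integrable (ψ n) P)
    (hdec : ∀ n : ℕ,
      (fun ω => {ω | (n : ℕ∞) < T ω}.indicator (fun _ => (1 : ℝ)) ω
          + (P[ψ (n + 1) | ℱ n]) ω) ≤ᵐ[P] ψ n) :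
    ∫⁻ ω, (T ω : ℝ≥0∞) ∂P ≤ ENNReal.ofReal (∫ ω, ψ 0 ω ∂P) :=
  ranking_supermartingale_expected_stopping_time_general P ℱ T hT ψ hnonneg hint hdec
end
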